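/- arXiv:2207.05599 — 8 statements merged into one kernel-verified Lean document; each statement's English description precedes it below -/
import Mathlib

section
/- For every integer n ≥ 1, the Sprague–Grundy value of the LCTR game on the staircase partition S_n equals n mod 2, and the Sprague–Grundy value of the Downright game on S_n equals (n−1) mod 2. -/
/-- The subpartition `λ[i,j]`: drop the first `i` rows, subtract `j` from each
remaining row, and delete all nonpositive entries. -/
def Subpart (l : List ℕ) (i j : ℕ) : List ℕ :=
  ((l.drop i).map (fun x => x - j)).filter (fun x => x ≠ 0)

/-- A partition: a nonincreasing finite list of positive integers. -/
def IsPartition (l : List ℕ) : Prop :=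
  l.Pairwise (· ≥ ·) ∧ ∀ x ∈ l, 0 < x

/-- Minimum excluded value of a finite set of naturals. -/
noncomputable def mex (s : Finset ℕ) : ℕ := sInf {n : ℕ | n ∉ s}

lemma measure_filter_le (l : List ℕ) :
    (l.filter (fun x => x ≠ 0)).sum + (l.filter (fun x => x ≠ 0)).length
      ≤ l.sum + l.length := by
  induction l with
  | nil => simp
  | cons a t ih =>
    simp only [List.filter_cons, decide_eq_true_eq, List.sum_cons, List.length_cons]
    by_cases h : a ≠ 0
    · rw [if_pos h]
      simp only [List.sum_cons, List.length_cons]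
      omega
    · rw [if_neg h]
      omega

lemma measure_mapsub_le (l : List ℕ) :
    ((l.map (fun x => x - 1)).filter (fun x => x ≠ 0)).sum
      + ((l.map (fun x => x - 1)).filter (fun x => x ≠ 0)).length ≤ l.sum := by
  induction l with
  | nil => simp
  | cons a t ih =>
    simp only [List.map_cons, List.filter_cons, decide_eq_true_eq, List.sum_cons]
    by_cases h : a - 1 ≠ 0
    · rw [if_pos h]
      simp only [List.sum_cons, List.length_cons]
      omega
    · rw [if_neg h]
      omega

lemma subpart10_lt (a : ℕ) (t : List ℕ) :
    (Subpart (a :: t) 1 0).sum + (Subpart (a :: t) 1 0).length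
      < (a :: t).sum + (a :: t).length := by
  have h : Subpart (a :: t) 1 0 = t.filter (fun x => x ≠ 0) := by
    simp [Subpart]
  rw [h]
  have := measure_filter_le t
  simp only [List.sum_cons, List.length_cons]
  omega

lemma subpart01_lt (a : ℕ) (t : List ℕ) :
    (Subpart (a :: t) 0 1).sum + (Subpart (a :: t) 0 1).length
      < (a :: t).sum + (a :: t).length := by
  have h : Subpart (a :: t) 0 1
      = ((a :: t).map (fun x => x - 1)).filter (fun x => x ≠ 0) := by
    simp [Subpart]
  rw [h]
  have := measure_mapsub_le (a :: t)
  have hlen : 0 < (a :: t).length := by simp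
  omega

/-- Sprague–Grundy values of the LCTR game. -/
noncomputable def SGL : List ℕ → ℕ
  | [] => 0
  | a :: t => mex {SGL (Subpart (a :: t) 1 0), SGL (Subpart (a :: t) 0 1)}
  termination_by l => l.sum + l.length
  decreasing_by
  · exact subpart10_lt a t
  · exact subpart01_lt a t

/-- Sprague–Grundy values of the Downright game (only meaningful on nonempty
partitions; the value on `[]` is a junk value). -/
noncomputable def SGD : List ℕ → ℕ
  | [] => 0
  | a :: t =>
      mex ((if t = [] then (∅ : Finset ℕ) else {SGD (Subpart (a :: t) 1 0)}) ∪
           (if a ≤ 1 then (∅ : Finset ℕ) else {SGD (Subpart (a :: t) 0 1)}))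
  termination_by l => l.sum + l.length
  decreasing_by
  · exact subpart10_lt a t
  · exact subpart01_lt a t

/-- Durfee length: the largest `ℓ` with `λ_ℓ ≥ ℓ`. -/
def durfee (l : List ℕ) : ℕ :=
  Nat.findGreatest (fun k => k ≤ l.getD (k - 1) 0) l.length

/-- The conjugate partition. -/
def conj (l : List ℕ) : List ℕ :=
  (List.range (l.headD 0)).map (fun i => (l.filter (fun x => i + 1 ≤ x)).length)

/-- P-positions of misère LCTR. -/
def PmLCTR : List ℕ → Prop
  | [] => False
  | a :: t => ¬ PmLCTR (Subpart (a :: t) 1 0) ∧ ¬ PmLCTR (Subpart (a :: t) 0 1)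
  termination_by l => l.sum + l.length
  decreasing_by
  · exact subpart10_lt a t
  · exact subpart01_lt a t

/-- Number of nodes in the game tree of LCTR. -/
def nodesL : List ℕ → ℕ
  | [] => 1
  | a :: t => 1 + nodesL (Subpart (a :: t) 1 0) + nodesL (Subpart (a :: t) 0 1)
  termination_by l => l.sum + l.length
  decreasing_by
  · exact subpart10_lt a t
  · exact subpart01_lt a t

/-- Number of leaves in the game tree of LCTR. -/
def leavesL : List ℕ → ℕ
  | [] => 1
  | a :: t => leavesL (Subpart (a :: t) 1 0) + leavesL (Subpart (a :: t) 0 1)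
  termination_by l => l.sum + l.length
  decreasing_by
  · exact subpart10_lt a t
  · exact subpart01_lt a t

/-- Number of nodes in the game tree of Downright (junk value `0` on `[]`). -/
def nodesD : List ℕ → ℕ
  | [] => 0
  | a :: t =>
      1 + (if t = [] then 0 else nodesD (Subpart (a :: t) 1 0))
        + (if a ≤ 1 then 0 else nodesD (Subpart (a :: t) 0 1))
  termination_by l => l.sum + l.length
  decreasing_by
  · exact subpart10_lt a t
  · exact subpart01_lt a t

/-- Number of leaves in the game tree of Downright (junk value `0` on `[]`). -/
def leavesD : List ℕ → ℕ
  | [] => 0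
  | a :: t =>
      if t = [] ∧ a ≤ 1 then 1
      else (if t = [] then 0 else leavesD (Subpart (a :: t) 1 0))
        + (if a ≤ 1 then 0 else leavesD (Subpart (a :: t) 0 1))
  termination_by l => l.sum + l.length
  decreasing_by
  · exact subpart10_lt a t
  · exact subpart01_lt a t

/-- The staircase partition `(n, n-1, …, 1)`. -/
def staircase (n : ℕ) : List ℕ := (List.range n).map (fun k => n - k)

/-- The gamma partition `Γ_{r,c} = (c, 1, …, 1)` with `r` parts. -/
def gammaPart (r c : ℕ) : List ℕ := c :: List.replicate (r - 1) 1

/-- The rectangular partition `R_{r,c} = (c, …, c)` with `r` parts. -/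
def rectPart (r c : ℕ) : List ℕ := List.replicate r c

lemma staircase_succ (n : ℕ) : staircase (n + 1) = (n + 1) :: staircase n := by
  unfold staircase
  rw [List.range_succ_eq_map]
  simp [List.map_map, Function.comp]

lemma staircase_pos (n : ℕ) : ∀ x ∈ staircase n, x ≠ 0 := by
  intro x hx
  simp only [staircase, List.mem_map, List.mem_range] at hx
  obtain ⟨k, hk, rfl⟩ := hx
  omega

lemma staircase_filter (n : ℕ) :
    (staircase n).filter (fun x => x ≠ 0) = staircase n := by
  simp only [ne_eq, List.filter_eq_self, decide_not, Bool.not_eq_true',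
    decide_eq_false_iff_not]
  exact staircase_pos n


lemma stair10 (n : ℕ) : Subpart (staircase (n + 1)) 1 0 = staircase n := by
  rw [staircase_succ]
  simp [Subpart, staircase_filter]
  exact staircase_pos n

lemma stair01 (n : ℕ) : Subpart (staircase (n + 1)) 0 1 = staircase n := by
  simp only [Subpart, List.drop_zero, staircase]
  rw [List.range_succ]
  simp only [List.map_append, List.map_map, List.filter_append]
  have h1 : ((List.range n).map ((fun x => x - 1) ∘ fun k => n + 1 - k)) =
      (List.range n).map (fun k => n - k) := by
    apply List.map_congr_left
    intro k hk
    simp only [Function.comp]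
    omega
  rw [h1]
  have h2 := staircase_filter n
  simp only [staircase] at h2
  rw [h2]
  simp

lemma mex_single (k : ℕ) : mex {k} = if k = 0 then 1 else 0 := by
  unfold mex
  split
  · subst k
    apply le_antisymm
    · apply Nat.sInf_le; simp
    · rcases Nat.eq_zero_or_pos (sInf {n : ℕ | n ∉ ({0} : Finset ℕ)}) with h | h
      · rw [Nat.sInf_eq_zero] at h
        rcases h with h | h
        · simp at h
        · exfalso
          have : (1 : ℕ) ∈ {n : ℕ | n ∉ ({0} : Finset ℕ)} := by simp
          rw [h] at this; simp at this
      · exact h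
  · rw [Nat.sInf_eq_zero]
    left; simp; omega

lemma mex_empty : mex (∅ : Finset ℕ) = 0 := by
  unfold mex
  rw [Nat.sInf_eq_zero]
  left; simp

lemma SGL_staircase (n : ℕ) : SGL (staircase (n + 1)) = (n + 1) % 2 := by
  induction n with
  | zero =>
    rw [staircase_succ]
    rw [SGL]
    rw [← staircase_succ, stair10, stair01]
    have : staircase 0 = [] := by simp [staircase]
    rw [this]
    rw [show SGL [] = 0 by rw [SGL]]
    simp [mex_single]
  | succ m ih =>
    rw [staircase_succ, SGL, ← staircase_succ, stair10, stair01, ih]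
    rw [show ({(m+1) % 2, (m+1) % 2} : Finset ℕ) = {(m+1) % 2} by simp]
    rw [mex_single]
    split_ifs <;> omega

lemma SGD_staircase (n : ℕ) : SGD (staircase (n + 1)) = n % 2 := by
  induction n with
  | zero =>
    have : staircase 1 = [1] := rfl
    rw [this, SGD]
    simp [mex_empty]
  | succ m ih =>
    rw [staircase_succ, SGD, ← staircase_succ, stair10, stair01, ih]
    have hne : staircase (m + 1) ≠ [] := by
      rw [staircase_succ]; simp
    rw [if_neg hne, if_neg (by omega : ¬ m + 1 + 1 ≤ 1)]
    rw [show ({m % 2} ∪ {m % 2} : Finset ℕ) = {m % 2} by simp]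
    rw [mex_single]
    split_ifs <;> omega

/-- For every integer `n ≥ 1`, the Sprague–Grundy value of LCTR on the
staircase `S_n` is `n % 2`, and that of Downright on `S_n` is `(n-1) % 2`. -/
theorem stmt0 (n : ℕ) (hn : 1 ≤ n) :
    SGL (staircase n) = n % 2 ∧ SGD (staircase n) = (n - 1) % 2 := by
  obtain ⟨m, rfl⟩ : ∃ m, n = m + 1 := ⟨n - 1, by omega⟩
  exact ⟨SGL_staircase m, by simpa using SGD_staircase m⟩
end

section
/- For all integers r ≥ 1 and c ≥ 1, the Sprague–Grundy value of the LCTR game on the gamma partition Γ_{r,c} equals 0 if c > 1 and r > 1; equals 1 if (r = 1 and c is odd) or (c = 1 and r is odd); and equals 2 otherwise. -/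
lemma mex_eq_of (s : Finset ℕ) (k : ℕ) (h1 : k ∉ s) (h2 : ∀ m, m < k → m ∈ s) :
    mex s = k := by
  apply le_antisymm
  · exact Nat.sInf_le h1
  · apply le_csInf ⟨k, h1⟩
    intro n hn
    by_contra h
    exact hn (h2 n (by omega))

lemma mex_eq_zero (s : Finset ℕ) (h : 0 ∉ s) : mex s = 0 :=
  mex_eq_of s 0 h (by omega)

lemma sgl_nil : SGL [] = 0 := by rw [SGL]

lemma sub10_rep (c k : ℕ) : Subpart (c :: List.replicate k 1) 1 0 = List.replicate k 1 := by
  simp [Subpart, List.filter_eq_self]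

lemma sub01_gamma (c k : ℕ) :
    Subpart (c :: List.replicate k 1) 0 1 = if c ≤ 1 then [] else [c - 1] := by
  have : (List.replicate k 1).map (fun x => x - 1) = List.replicate k 0 := by
    simp [List.map_replicate]
  simp only [Subpart, List.drop_zero, List.map_cons, this, List.filter_cons]
  by_cases h : c ≤ 1
  · have hc : c - 1 = 0 := by omega
    simp [h, hc, List.filter_eq_nil_iff]
  · have hc : ¬ (c - 1 = 0) := by omega
    simp [h, hc, List.filter_eq_nil_iff]

lemma sgl_rep (r : ℕ) (hr : 1 ≤ r) :
    SGL (List.replicate r 1) = if Odd r then 1 else 2 := by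
  induction r with
  | zero => omega
  | succ n ih =>
    have hrep : List.replicate (n+1) 1 = 1 :: List.replicate n 1 := rfl
    rw [hrep, SGL, sub10_rep, sub01_gamma]
    simp only [le_refl, if_pos]
    rcases Nat.eq_zero_or_pos n with h0 | hpos
    · subst h0
      simp only [List.replicate_zero, sgl_nil]
      rw [show ({(0:ℕ), 0} : Finset ℕ) = {0} by rfl]
      rw [mex_eq_of {0} 1 (by decide) (by decide)]
      simp [Nat.odd_iff]
    · rw [ih hpos, sgl_nil]
      rcases Nat.even_or_odd n with he | ho
      · have h1 : ¬ Odd n := by simp [Nat.not_odd_iff_even.mpr he]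
        have h2 : Odd (n+1) := Even.add_one he
        rw [if_neg h1, if_pos h2]
        exact mex_eq_of _ 1 (by decide) (by decide)
      · have h2 : ¬ Odd (n+1) := by rw [Nat.not_odd_iff_even]; exact Odd.add_one ho
        rw [if_pos ho, if_neg h2]
        exact mex_eq_of _ 2 (by decide) (by decide)

lemma sgl_single (c : ℕ) (hc : 1 ≤ c) :
    SGL [c] = if Odd c then 1 else 2 := by
  induction c with
  | zero => omega
  | succ n ih =>
    have h10 : Subpart [n+1] 1 0 = [] := by simp [Subpart]
    have h01 := sub01_gamma (n+1) 0
    simp only [List.replicate_zero] at h01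
    rw [show ([n+1] : List ℕ) = (n+1) :: [] from rfl, SGL, h10, h01, sgl_nil]
    rcases Nat.eq_zero_or_pos n with h0 | hpos
    · subst h0
      simp only [le_refl, if_pos, sgl_nil]
      rw [show ({(0:ℕ), 0} : Finset ℕ) = {0} by rfl]
      rw [mex_eq_of {0} 1 (by decide) (by decide)]
      simp [Nat.odd_iff]
    · have hle : ¬ (n + 1 ≤ 1) := by omega
      rw [if_neg hle]
      have : n + 1 - 1 = n := by omega
      rw [this, ih hpos]
      rcases Nat.even_or_odd n with he | ho
      · have h1 : ¬ Odd n := by simp [Nat.not_odd_iff_even.mpr he]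
        have h2 : Odd (n+1) := Even.add_one he
        rw [if_neg h1, if_pos h2]
        rw [show ({(0:ℕ), 2} : Finset ℕ) = {0, 2} from rfl]
        exact mex_eq_of _ 1 (by decide) (by decide)
      · have h2 : ¬ Odd (n+1) := by rw [Nat.not_odd_iff_even]; exact Odd.add_one ho
        rw [if_pos ho, if_neg h2]
        exact mex_eq_of _ 2 (by decide) (by decide)

/-- Sprague–Grundy values of LCTR on the gamma partitions. -/
theorem stmt1 (r c : ℕ) (hr : 1 ≤ r) (hc : 1 ≤ c) :
    SGL (gammaPart r c) =
      if 1 < c ∧ 1 < r then 0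
      else if (r = 1 ∧ Odd c) ∨ (c = 1 ∧ Odd r) then 1
      else 2 := by
  unfold gammaPart
  rcases Nat.lt_or_ge c 2 with hc2 | hc2
  · -- c = 1
    have hc1 : c = 1 := by omega
    subst hc1
    have : (1 : ℕ) :: List.replicate (r-1) 1 = List.replicate r 1 := by
      rw [show r = (r-1)+1 by omega]; rfl
    rw [this, sgl_rep r hr]
    rcases Nat.even_or_odd r with he | ho
    · have h1 : ¬ Odd r := by rw [Nat.not_odd_iff_even]; exact he
      have hne : r ≠ 1 := by rcases he with ⟨k, hk⟩; omega
      rw [if_neg h1, if_neg (by omega : ¬ (1 < (1:ℕ) ∧ 1 < r)),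
        if_neg (show ¬ ((r = 1 ∧ Odd 1) ∨ (1 = 1 ∧ Odd r)) by
          rintro (⟨h, _⟩ | ⟨_, h⟩); exact hne h; exact h1 h)]
    · have hr1 : ¬ (1 < (1:ℕ) ∧ 1 < r) := by omega
      rw [if_pos ho, if_neg hr1,
        if_pos (show (r = 1 ∧ Odd 1) ∨ (1 = 1 ∧ Odd r) from Or.inr ⟨rfl, ho⟩)]
  rcases Nat.lt_or_ge r 2 with hr2 | hr2
  · -- r = 1
    have hr1 : r = 1 := by omega
    subst hr1
    simp only [Nat.sub_self, List.replicate_zero]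
    rw [sgl_single c (by omega)]
    rcases Nat.even_or_odd c with he | ho
    · have h1 : ¬ Odd c := by rw [Nat.not_odd_iff_even]; exact he
      have hne : c ≠ 1 := by rcases he with ⟨k, hk⟩; omega
      rw [if_neg h1, if_neg (by omega : ¬ (1 < c ∧ 1 < (1:ℕ))),
        if_neg (show ¬ ((True ∧ Odd c) ∨ (c = 1 ∧ Odd 1)) by
          rintro (⟨_, h⟩ | ⟨h, _⟩); exact h1 h; exact hne h)]
    · have hc1 : ¬ (1 < c ∧ 1 < (1:ℕ)) := by omega
      rw [if_pos ho, if_neg hc1,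
        if_pos (show (True ∧ Odd c) ∨ (c = 1 ∧ Odd 1) from Or.inl ⟨trivial, ho⟩)]
  · -- r ≥ 2, c ≥ 2
    rw [SGL, sub10_rep, sub01_gamma]
    have hle : ¬ (c ≤ 1) := by omega
    rw [if_neg hle, sgl_rep (r-1) (by omega), sgl_single (c-1) (by omega)]
    have hmex : ∀ x y : ℕ, x ≠ 0 → y ≠ 0 → mex {x, y} = 0 := by
      intro x y hx hy
      exact mex_eq_zero _ (by simp [hx.symm, hy.symm])
    have h0 : mex {(if Odd (r-1) then 1 else 2 : ℕ), (if Odd (c-1) then 1 else 2)} = 0 := by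
      apply hmex <;> split <;> omega
    rw [h0, if_pos ⟨by omega, by omega⟩]
end

section
/- For every partition λ, the Sprague–Grundy values of both LCTR and Downright are invariant under conjugation: SG_L(λ') = SG_L(λ), and, when λ is nonempty, SG_D(λ') = SG_D(λ). -/
section Aux

lemma head_max (l : List ℕ) (hs : l.Pairwise (· ≥ ·)) : ∀ x ∈ l, x ≤ l.headD 0 := by
  cases l with
  | nil => simp
  | cons a t =>
    intro x hx
    rcases List.mem_cons.1 hx with rfl | hx
    · simp
    · exact (List.pairwise_cons.1 hs).1 x hx

lemma part_tail {a : ℕ} {t : List ℕ} (hp : IsPartition (a :: t)) : IsPartition t :=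
  ⟨(List.pairwise_cons.1 hp.1).2, fun x hx => hp.2 x (List.mem_cons_of_mem a hx)⟩

lemma sub10_eq {a : ℕ} {t : List ℕ} (hp : IsPartition (a :: t)) : Subpart (a :: t) 1 0 = t := by
  have : Subpart (a :: t) 1 0 = t.filter (fun x => x ≠ 0) := by
    simp [Subpart]
  rw [this, List.filter_eq_self]
  intro x hx
  simpa using Nat.pos_iff_ne_zero.1 (hp.2 x (List.mem_cons_of_mem a hx))

lemma part_sub01 {l : List ℕ} (hp : IsPartition l) : IsPartition (Subpart l 0 1) := by
  constructor
  · unfold Subpart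
    simp only [List.drop_zero]
    exact List.Pairwise.filter _ (List.Pairwise.map _ (fun x y h => Nat.sub_le_sub_right h 1) hp.1)
  · intro x hx
    unfold Subpart at hx
    have := List.of_mem_filter hx
    simp only [ne_eq, decide_eq_true_eq] at this
    omega

lemma filter_range_map (f : ℕ → ℕ) (a b : ℕ) (hb : b ≤ a)
    (h1 : ∀ i < b, f i ≠ 0) (h2 : ∀ i, b ≤ i → i < a → f i = 0) :
    ((List.range a).map f).filter (fun x => x ≠ 0) = (List.range b).map f := by
  have ha : a = b + (a - b) := by omega
  have e1 : ((List.range b).map f).filter (fun x => x ≠ 0) = (List.range b).map f := by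
    rw [List.filter_eq_self]
    intro x hx
    simp only [List.mem_map, List.mem_range] at hx
    obtain ⟨i, hi, rfl⟩ := hx
    simpa using h1 i hi
  have e2 : (((List.range (a - b)).map (fun x => b + x)).map f).filter (fun x => x ≠ 0)
      = [] := by
    rw [List.filter_eq_nil_iff]
    intro x hx
    simp only [List.map_map, List.mem_map, List.mem_range, Function.comp] at hx
    obtain ⟨i, hi, rfl⟩ := hx
    simp [h2 (b + i) (by omega) (by omega)]
  conv_lhs => rw [ha, List.range_add]
  rw [List.map_append, List.filter_append, e1, e2, List.append_nil]

lemma conj_cons {a : ℕ} {t : List ℕ} (hp : IsPartition (a :: t)) :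
    conj (a :: t) = (a :: t).length ::
      (List.range (a - 1)).map (fun i => (((a :: t)).filter (fun x => i + 2 ≤ x)).length) := by
  have ha : 0 < a := hp.2 a (by simp)
  have hr : List.range a = 0 :: (List.range (a - 1)).map Nat.succ := by
    conv_lhs => rw [show a = (a - 1) + 1 by omega]
    exact List.range_succ_eq_map
  unfold conj
  simp only [List.headD_cons]
  rw [hr]
  simp only [List.map_cons, List.map_map]
  congr 1
  · congr 1
    rw [List.filter_eq_self]
    intro x hx
    have := hp.2 x hx
    simp only [decide_eq_true_eq]
    omega

lemma conj_ne_nil {a : ℕ} {t : List ℕ} (hp : IsPartition (a :: t)) : conj (a :: t) ≠ [] := by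
  rw [conj_cons hp]; simp

lemma conj_headD {a : ℕ} {t : List ℕ} (hp : IsPartition (a :: t)) :
    (conj (a :: t)).headD 0 = (a :: t).length := by
  rw [conj_cons hp]; rfl

lemma conj_tail_nil {a : ℕ} {t : List ℕ} (hp : IsPartition (a :: t)) :
    ((conj (a :: t)).tail = []) ↔ a ≤ 1 := by
  rw [conj_cons hp]
  simp only [List.tail_cons, List.map_eq_nil_iff, List.range_eq_nil]
  omega

lemma sub01_headD {a : ℕ} {t : List ℕ} (hp : IsPartition (a :: t)) :
    (Subpart (a :: t) 0 1).headD 0 = a - 1 := by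
  have ha : 0 < a := hp.2 a (by simp)
  unfold Subpart
  simp only [List.drop_zero, List.map_cons]
  by_cases h : 2 ≤ a
  · rw [List.filter_cons_of_pos (by simp; omega)]
    rfl
  · have ha1 : a = 1 := by omega
    rw [List.filter_eq_nil_iff.2]
    · simp [ha1]
    · intro x hx
      simp only [List.mem_cons, List.mem_map] at hx
      rcases hx with rfl | ⟨y, hy, rfl⟩
      · simp; omega
      · have := head_max (a :: t) hp.1 y (List.mem_cons_of_mem a hy)
        simp at this ⊢
        omega

lemma sub01_ne_nil {a : ℕ} {t : List ℕ} (hp : IsPartition (a :: t)) (ha : ¬ a ≤ 1) :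
    Subpart (a :: t) 0 1 ≠ [] := by
  intro h
  have := sub01_headD hp
  rw [h] at this
  simp at this
  omega

lemma swapB {a : ℕ} {t : List ℕ} (hp : IsPartition (a :: t)) :
    Subpart (conj (a :: t)) 1 0 = conj (Subpart (a :: t) 0 1) := by
  rw [conj_cons hp]
  have hL : Subpart ((a :: t).length ::
      (List.range (a - 1)).map (fun i => (((a :: t)).filter (fun x => i + 2 ≤ x)).length)) 1 0
      = (List.range (a - 1)).map (fun i => (((a :: t)).filter (fun x => i + 2 ≤ x)).length) := by
    unfold Subpart
    simp only [List.drop_one, List.tail_cons]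
    rw [show (fun x => x - 0) = (id : ℕ → ℕ) by funext x; simp, List.map_id]
    rw [List.filter_eq_self]
    intro x hx
    simp only [List.mem_map, List.mem_range] at hx
    obtain ⟨i, hi, rfl⟩ := hx
    have : a ∈ (a :: t).filter (fun x => i + 2 ≤ x) := by
      apply List.mem_filter_of_mem (by simp)
      simp; omega
    have : 0 < ((a :: t).filter (fun x => i + 2 ≤ x)).length := List.length_pos_iff.2 (by
      intro h; rw [h] at this; simp at this)
    simp; omega
  rw [hL]
  unfold conj
  rw [sub01_headD hp]
  apply List.map_congr_left
  intro i _
  unfold Subpart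
  simp only [List.drop_zero]
  rw [List.filter_filter, List.filter_map, List.length_map]
  congr 1
  apply List.filter_congr
  intro x hx
  have := hp.2 x hx
  simp only [Function.comp, ← Bool.decide_and, decide_eq_decide]
  omega

lemma swapA {a : ℕ} {t : List ℕ} (hp : IsPartition (a :: t)) :
    Subpart (conj (a :: t)) 0 1 = conj t := by
  have ha : 0 < a := hp.2 a (by simp)
  have hb : t.headD 0 ≤ a := by
    cases t with
    | nil => simp
    | cons c t' => exact (List.pairwise_cons.1 hp.1).1 c (by simp)
  have key : ∀ i < a, (((a :: t)).filter (fun x => i + 1 ≤ x)).length - 1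
      = (t.filter (fun x => i + 1 ≤ x)).length := by
    intro i hi
    rw [List.filter_cons_of_pos (by simp; omega)]
    simp
  unfold conj Subpart
  simp only [List.headD_cons, List.drop_zero, List.map_map]
  rw [show ((fun x => x - 1) ∘ fun i => ((a :: t).filter (fun x => i + 1 ≤ x)).length)
      = (fun i => ((a :: t).filter (fun x => i + 1 ≤ x)).length - 1) from rfl]
  rw [filter_range_map _ a (t.headD 0) hb]
  · apply List.map_congr_left
    intro i hi
    simp only [List.mem_range] at hi
    exact key i (by omega)
  · intro i hi
    rw [key i (by omega)]
    cases t with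
    | nil => simp at hi
    | cons c t' =>
      simp only [List.headD_cons] at hi
      have : c ∈ (c :: t').filter (fun x => i + 1 ≤ x) := by
        apply List.mem_filter_of_mem (by simp)
        simp; omega
      have := List.length_pos_iff.2 (by intro h; rw [h] at this; simp at this :
        (c :: t').filter (fun x => i + 1 ≤ x) ≠ [])
      omega
  · intro i hbi hia
    rw [key i hia]
    rw [List.length_eq_zero_iff]
    rw [List.filter_eq_nil_iff]
    intro x hx
    have := head_max t (List.pairwise_cons.1 hp.1).2 x hx
    simp
    omega

lemma SGL_ne {l : List ℕ} (h : l ≠ []) :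
    SGL l = mex {SGL (Subpart l 1 0), SGL (Subpart l 0 1)} := by
  cases l with
  | nil => exact absurd rfl h
  | cons a t => rw [SGL]

lemma SGD_ne {l : List ℕ} (h : l ≠ []) :
    SGD l = mex ((if l.tail = [] then (∅ : Finset ℕ) else {SGD (Subpart l 1 0)}) ∪
      (if l.headD 0 ≤ 1 then (∅ : Finset ℕ) else {SGD (Subpart l 0 1)})) := by
  cases l with
  | nil => exact absurd rfl h
  | cons a t => rw [SGD]; rfl

end Aux

/-- Sprague–Grundy values of LCTR and Downright are invariant under
conjugation. -/
theorem stmt4 (l : List ℕ) (hp : IsPartition l) :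
    SGL (conj l) = SGL l ∧ (l ≠ [] → SGD (conj l) = SGD l) := by
  suffices H : ∀ n (l : List ℕ), l.sum + l.length ≤ n → IsPartition l →
      SGL (conj l) = SGL l ∧ (l ≠ [] → SGD (conj l) = SGD l) from
    H (l.sum + l.length) l le_rfl hp
  intro n
  induction n with
  | zero =>
    intro l hl _
    have hnil : l = [] := List.length_eq_zero_iff.1 (by omega)
    subst hnil
    exact ⟨rfl, fun h => absurd rfl h⟩
  | succ n ih =>
    intro l hl hp
    cases l with
    | nil => exact ⟨rfl, fun h => absurd rfl h⟩
    | cons a t =>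
      have hpt : IsPartition t := part_tail hp
      have hp01 : IsPartition (Subpart (a :: t) 0 1) := part_sub01 hp
      have h10 : Subpart (a :: t) 1 0 = t := sub10_eq hp
      have hm10 := subpart10_lt a t
      have hm01 := subpart01_lt a t
      rw [h10] at hm10
      have iht := ih t (by omega) hpt
      have ih01 := ih (Subpart (a :: t) 0 1) (by omega) hp01
      have hA := swapA hp
      have hB := swapB hp
      constructor
      · rw [SGL_ne (conj_ne_nil hp), SGL_ne (List.cons_ne_nil a t), hA, hB, h10,
          iht.1, ih01.1, Finset.pair_comm (SGL (Subpart (a :: t) 0 1)) (SGL t)]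
      · intro _
        rw [SGD_ne (conj_ne_nil hp), SGD_ne (List.cons_ne_nil a t), hA, hB, h10]
        simp only [List.tail_cons, List.headD_cons]
        have e1 : (if (conj (a :: t)).tail = [] then (∅ : Finset ℕ)
              else {SGD (conj (Subpart (a :: t) 0 1))})
            = (if a ≤ 1 then (∅ : Finset ℕ) else {SGD (Subpart (a :: t) 0 1)}) := by
          by_cases ha1 : a ≤ 1
          · rw [if_pos ((conj_tail_nil hp).2 ha1), if_pos ha1]
          · rw [if_neg (fun h => ha1 ((conj_tail_nil hp).1 h)), if_neg ha1,
              ih01.2 (sub01_ne_nil hp ha1)]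
        have e2 : (if (conj (a :: t)).headD 0 ≤ 1 then (∅ : Finset ℕ)
              else {SGD (conj t)})
            = (if t = [] then (∅ : Finset ℕ) else {SGD t}) := by
          have hh : ((conj (a :: t)).headD 0 ≤ 1) ↔ t = [] := by
            rw [conj_headD hp]
            simp only [List.length_cons]
            constructor
            · intro h
              exact List.length_eq_zero_iff.1 (by omega)
            · intro h
              simp [h]
          by_cases ht : t = []
          · rw [if_pos (hh.2 ht), if_pos ht]
          · rw [if_neg (fun h => ht (hh.1 h)), if_neg ht, iht.2 ht]
        rw [e1, e2, Finset.union_comm]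
        congr
end

section
/- For every nonempty partition λ, λ is a P-position of LCTR under misère play if and only if λ is a P-position of Downright under normal play, i.e. Pm(λ) holds if and only if SG_D(λ) = 0. -/
lemma mex_eq_zero_iff (s : Finset ℕ) : mex s = 0 ↔ 0 ∉ s := by
  constructor
  · intro h hs
    have hne : {n : ℕ | n ∉ s}.Nonempty := by
      obtain ⟨n, hn⟩ := s.exists_notMem
      exact ⟨n, hn⟩
    have := Nat.sInf_mem hne
    rw [mex] at h
    rw [h] at this
    exact this hs
  · intro h
    exact Nat.sInf_eq_zero.mpr (Or.inl h)

lemma subpart10_eq (a : ℕ) (t : List ℕ) (ht : ∀ x ∈ t, 0 < x) :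
    Subpart (a :: t) 1 0 = t := by
  have : (t.map (fun x => x - 0)) = t := by
    simp
  simp only [Subpart, List.drop_one, List.tail_cons, this]
  rw [List.filter_eq_self]
  intro x hx
  simpa using (ht x hx).ne'

lemma subpart01_eq (a : ℕ) (t : List ℕ) :
    Subpart (a :: t) 0 1 = ((a :: t).map (fun x => x - 1)).filter (fun x => x ≠ 0) := by
  simp [Subpart]

lemma subpart01_partition (l : List ℕ) (hp : IsPartition l) :
    IsPartition (Subpart l 0 1) := by
  constructor
  · have h1 : (l.map (fun x => x - 1)).Pairwise (· ≥ ·) :=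
      List.Pairwise.map _ (fun {a b} h => Nat.sub_le_sub_right h 1) hp.1
    exact List.Pairwise.sublist List.filter_sublist h1
  · intro x hx
    simp only [Subpart, List.mem_filter, decide_eq_true_eq] at hx
    omega

lemma subpart01_ne (a : ℕ) (t : List ℕ) (ha : 1 < a) : Subpart (a :: t) 0 1 ≠ [] := by
  rw [subpart01_eq]
  simp only [List.map_cons, List.filter_cons]
  rw [if_pos (by simp; omega)]
  simp

lemma subpart01_nil (a : ℕ) (t : List ℕ) (h : ∀ x ∈ a :: t, x ≤ 1) :
    Subpart (a :: t) 0 1 = [] := by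
  rw [subpart01_eq, List.filter_eq_nil_iff]
  intro x hx
  simp only [List.mem_map] at hx
  obtain ⟨y, hy, rfl⟩ := hx
  have := h y hy
  simp
  omega

lemma key : ∀ n l, l.sum + l.length ≤ n → IsPartition l → l ≠ [] →
    (PmLCTR l ↔ SGD l = 0) := by
  intro n
  induction n with
  | zero =>
    intro l h hp hne
    cases l with
    | nil => exact absurd rfl hne
    | cons a t => simp [List.length_cons] at h
  | succ n ih =>
    intro l h hp hne
    obtain ⟨a, t, rfl⟩ := List.exists_cons_of_ne_nil hne
    have hpos : ∀ x ∈ a :: t, 0 < x := hp.2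
    have ha : 0 < a := hpos a List.mem_cons_self
    have hat : ∀ x ∈ t, a ≥ x := (List.pairwise_cons.mp hp.1).1
    have htpos : ∀ x ∈ t, 0 < x := fun x hx => hpos x (List.mem_cons_of_mem a hx)
    have h10 : Subpart (a :: t) 1 0 = t := subpart10_eq a t htpos
    rw [PmLCTR, SGD, mex_eq_zero_iff, h10]
    by_cases ht : t = []
    · subst ht
      by_cases ha1 : a ≤ 1
      · have h01 : Subpart (a :: ([] : List ℕ)) 0 1 = [] := by
          apply subpart01_nil
          intro x hx
          simp at hx
          omega
        rw [h01]
        simp [PmLCTR, ha1]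
      · have hne01 : Subpart (a :: ([] : List ℕ)) 0 1 ≠ [] := subpart01_ne a [] (by omega)
        have hp01 : IsPartition (Subpart (a :: ([] : List ℕ)) 0 1) :=
          subpart01_partition _ hp
        have hm01 : (Subpart (a :: ([] : List ℕ)) 0 1).sum
            + (Subpart (a :: ([] : List ℕ)) 0 1).length ≤ n := by
          have := subpart01_lt a ([] : List ℕ)
          omega
        have := ih _ hm01 hp01 hne01
        simp only [if_pos rfl, if_neg ha1, Finset.empty_union, Finset.mem_singleton]
        simp [PmLCTR, this, eq_comm]
    · have hpt : IsPartition t :=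
        ⟨(List.pairwise_cons.mp hp.1).2, htpos⟩
      have hmt : t.sum + t.length ≤ n := by
        have := subpart10_lt a t
        rw [h10] at this
        omega
      have iht := ih _ hmt hpt ht
      by_cases ha1 : a ≤ 1
      · have h01 : Subpart (a :: t) 0 1 = [] := by
          apply subpart01_nil
          intro x hx
          rcases List.mem_cons.mp hx with rfl | hx
          · exact ha1
          · exact le_trans (hat x hx) ha1
        rw [h01]
        simp only [if_neg ht, if_pos ha1, Finset.union_empty, Finset.mem_singleton]
        simp [PmLCTR, iht, eq_comm]
      · have hne01 : Subpart (a :: t) 0 1 ≠ [] := subpart01_ne a t (by omega)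
        have hp01 : IsPartition (Subpart (a :: t) 0 1) := subpart01_partition _ hp
        have hm01 : (Subpart (a :: t) 0 1).sum + (Subpart (a :: t) 0 1).length ≤ n := by
          have := subpart01_lt a t
          omega
        have ih01 := ih _ hm01 hp01 hne01
        simp only [if_neg ht, if_neg ha1, Finset.mem_union, Finset.mem_singleton]
        constructor
        · rintro ⟨h1, h2⟩
          push_neg
          exact ⟨fun hh => h1 (iht.mpr hh.symm), fun hh => h2 (ih01.mpr hh.symm)⟩
        · intro hh
          push_neg at hh
          exact ⟨fun p => hh.1 (iht.mp p).symm, fun p => hh.2 (ih01.mp p).symm⟩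

/-- a nonempty partition is a P-position of misère LCTR iff it is a
P-position of Downright under normal play. -/
theorem stmt5 (l : List ℕ) (hp : IsPartition l) (hne : l ≠ []) :
    PmLCTR l ↔ SGD l = 0 := by
  exact key (l.sum + l.length) l le_rfl hp hne
end

section
/- Let α be a type of game positions with a move relation m : α → α → Prop such that the relation (b, a) ↦ m a b is well-founded. Call a position a terminal if there is no b with m a b. Define the misère P-positions by the recursion: Pm(a) holds if and only if a is not terminal and for every b with m a b, Pm(b) fails. Define the truncated-game (normal-play) P-positions by the recursion: Pt(a) holds if and only if for every b with m a b and b not terminal, Pt(b) fails. Then for every position a, Pm(a) holds if and only if a is not terminal and Pt(a) holds; in particular the P-positions of the misère game exactly correspond to those of its truncation. -/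
/-- for a finite impartial game, the P-positions of misère play are
exactly the non-terminal P-positions of the truncation under normal play. -/
theorem stmt6 {α : Type*} (m : α → α → Prop)
    (hwf : WellFounded (fun b a => m a b))
    (Pm Pt : α → Prop)
    (hPm : ∀ a, Pm a ↔ ((∃ b, m a b) ∧ ∀ b, m a b → ¬ Pm b))
    (hPt : ∀ a, Pt a ↔ ∀ b, m a b → (∃ c, m b c) → ¬ Pt b)
    (a : α) :
    Pm a ↔ ((∃ b, m a b) ∧ Pt a) := by
  induction a using hwf.induction with
  | _ a ih =>
    constructor
    · intro h
      obtain ⟨hne, hall⟩ := (hPm a).mp h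
      refine ⟨hne, (hPt a).mpr ?_⟩
      intro b hab hbne hPtb
      exact hall b hab ((ih b hab).mpr ⟨hbne, hPtb⟩)
    · rintro ⟨hne, hPta⟩
      refine (hPm a).mpr ⟨hne, fun b hab hPmb => ?_⟩
      obtain ⟨hbne, hPtb⟩ := (ih b hab).mp hPmb
      exact (hPt a).mp hPta b hab hbne hPtb
end

section
/- Let λ be a partition and let i, j ≥ 1 be integers such that λ[i,j] is a nonempty partition. Then the Sprague–Grundy values of the Downright game satisfy SG_D(λ[i−1,j−1]) = SG_D(λ[i,j]). -/
-- mex facts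

lemma mex_notMem (s : Finset ℕ) : mex s ∉ s := by
  have hne : {n : ℕ | n ∉ s}.Nonempty := by
    obtain ⟨x, hx⟩ := Infinite.exists_notMem_finset s
    exact ⟨x, hx⟩
  simpa [mex] using Nat.sInf_mem hne

lemma mex_eq {s : Finset ℕ} {m : ℕ} (h1 : m ∉ s) (h2 : ∀ k < m, k ∈ s) : mex s = m := by
  refine le_antisymm (Nat.sInf_le h1) ?_
  by_contra h
  push_neg at h
  have hmem : sInf {n : ℕ | n ∉ s} ∈ {n : ℕ | n ∉ s} := Nat.sInf_mem ⟨m, h1⟩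
  exact hmem (h2 _ h)

lemma mex_singleton (y : ℕ) : mex ({y} : Finset ℕ) = if y = 0 then 1 else 0 := by
  split_ifs with h
  · subst h; exact mex_eq (by simp) (by intro k hk; interval_cases k; simp)
  · exact mex_eq (by simp [Ne.symm h]) (by omega)

lemma mex_pair {x y : ℕ} (h : x ≠ mex {y}) : mex ({x, y} : Finset ℕ) = mex ({y} : Finset ℕ) := by
  rw [mex_singleton] at *
  split_ifs at * with hy
  · subst hy
    exact mex_eq (by simp; omega) (by intro k hk; interval_cases k; simp)
  · exact mex_eq (by simp; omega) (by omega)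

lemma mex_pair_zero {x y : ℕ} (hx : x ≠ 0) (hy : y ≠ 0) : mex ({x, y} : Finset ℕ) = 0 :=
  mex_eq (by simp; omega) (by omega)

-- sorted facts
lemma sorted_map_sub {l : List ℕ} (h : l.Pairwise (· ≥ ·)) (j : ℕ) :
    (l.map (fun x => x - j)).Pairwise (· ≥ ·) :=
  List.Pairwise.map _ (fun a b hab => Nat.sub_le_sub_right hab j) h

lemma sorted_filter {l : List ℕ} (h : l.Pairwise (· ≥ ·)) (p : ℕ → Bool) :
    (l.filter p).Pairwise (· ≥ ·) := List.Pairwise.filter p h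

lemma subpart_sorted {l : List ℕ} (h : l.Pairwise (· ≥ ·)) (i j : ℕ) :
    (Subpart l i j).Pairwise (· ≥ ·) :=
  sorted_filter (sorted_map_sub (h.drop) j) _

lemma subpart_isPartition {l : List ℕ} (h : IsPartition l) (i j : ℕ) :
    IsPartition (Subpart l i j) := by
  refine ⟨subpart_sorted h.1 i j, ?_⟩
  intro x hx
  simp only [Subpart, List.mem_filter, decide_eq_true_eq] at hx
  omega

lemma filter_eq_takeWhile {m : List ℕ} (h : m.Pairwise (· ≥ ·)) :
    m.filter (fun x => x ≠ 0) = m.takeWhile (fun x => x ≠ 0) := by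
  induction m with
  | nil => rfl
  | cons a t ih =>
    rw [List.pairwise_cons] at h
    by_cases ha : a = 0
    · subst ha
      simp only [List.filter_cons, List.takeWhile_cons]
      norm_num
      intro x hx
      have := h.1 x hx
      omega
    · simp only [List.filter_cons, List.takeWhile_cons]
      rw [if_pos (by simpa using ha), if_pos (by simpa using ha), ih h.2]

lemma dropWhile_zero {m : List ℕ} (h : m.Pairwise (· ≥ ·)) :
    ∀ x ∈ m.dropWhile (fun x => x ≠ 0), x = 0 := by
  induction m with
  | nil => simp
  | cons a t ih =>
    rw [List.pairwise_cons] at h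
    by_cases ha : a = 0
    · subst ha
      rw [List.dropWhile_cons, if_neg (by simp)]
      intro x hx
      rcases List.mem_cons.mp hx with rfl | hx
      · rfl
      · have := h.1 x hx; omega
    · rw [List.dropWhile_cons, if_pos (by simpa using ha)]
      exact ih h.2

lemma subpart_subpart {l : List ℕ} (h : l.Pairwise (· ≥ ·)) (i j i' j' : ℕ) :
    Subpart (Subpart l i j) i' j' = Subpart l (i + i') (j + j') := by
  have hm : (((l.drop i).map (fun x => x - j))).Pairwise (· ≥ ·) :=
    sorted_map_sub (h.drop) j
  set m := (l.drop i).map (fun x => x - j) with hmdef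
  show ((((m.filter (fun x => x ≠ 0)).drop i').map (fun x => x - j')).filter (fun x => x ≠ 0))
      = ((l.drop (i + i')).map (fun x => x - (j + j'))).filter (fun x => x ≠ 0)
  have key : (((m.filter (fun x => x ≠ 0)).drop i').map (fun x => x - j')).filter (fun x => x ≠ 0)
      = (((m.drop i')).map (fun x => x - j')).filter (fun x => x ≠ 0) := by
    conv_rhs => rw [← List.takeWhile_append_dropWhile (p := fun x => decide (x ≠ 0)) (l := m)]
    rw [filter_eq_takeWhile hm, List.drop_append, List.map_append,
      List.filter_append]
    have h2 : ((((m.dropWhile (fun x => decide (x ≠ 0))).drop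
        (i' - (m.takeWhile (fun x => decide (x ≠ 0))).length)).map (fun x => x - j')).filter
        (fun x => x ≠ 0)) = [] := by
      apply List.filter_eq_nil_iff.mpr
      intro x hx
      simp only [List.mem_map] at hx
      obtain ⟨y, hy, rfl⟩ := hx
      have : y = 0 := dropWhile_zero hm y (List.mem_of_mem_drop hy)
      simp [this]
    rw [h2, List.append_nil]
  have hfun : ((fun x => x - j') ∘ fun x => x - j) = (fun x : ℕ => x - (j + j')) := by
    funext x
    simp only [Function.comp]
    omega
  rw [key, ← List.map_drop, List.drop_drop, List.map_map, hfun]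


lemma subpart10_cons {a : ℕ} {t : List ℕ} (ht : ∀ x ∈ t, 0 < x) :
    Subpart (a :: t) 1 0 = t := by
  simp only [Subpart, List.drop_one, List.tail_cons, Nat.sub_zero, List.map_id']
  exact List.filter_eq_self.mpr (fun x hx => by simpa using (ht x hx).ne')

lemma subpart01_cons {a : ℕ} (t : List ℕ) (ha : 2 ≤ a) :
    Subpart (a :: t) 0 1 = (a - 1) :: Subpart (a :: t) 1 1 := by
  simp only [Subpart, List.drop_zero, List.drop_one, List.tail_cons, List.map_cons,
    List.filter_cons]
  rw [if_pos (by simp; omega)]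

lemma subpart11_cons (a : ℕ) (t : List ℕ) :
    Subpart (a :: t) 1 1 = (t.map (fun x => x - 1)).filter (fun x => x ≠ 0) := by
  simp [Subpart]

lemma SGD_single {c : ℕ} (hc : 1 ≤ c) : SGD [c] = (c - 1) % 2 := by
  induction c with
  | zero => omega
  | succ n ih =>
    rw [SGD]
    rcases Nat.eq_zero_or_pos n with rfl | hn
    · norm_num [mex_empty]
    · have h1 : Subpart [n + 1] 0 1 = [n] := by
        simp [Subpart]; omega
      rw [if_pos rfl, if_neg (by omega), h1, Finset.empty_union, ih hn, mex_singleton]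
      split_ifs <;> omega

lemma SGD_col {r : ℕ} (hr : 1 ≤ r) : SGD (List.replicate r 1) = (r - 1) % 2 := by
  induction r with
  | zero => omega
  | succ n ih =>
    rw [List.replicate_succ, SGD]
    rcases Nat.eq_zero_or_pos n with rfl | hn
    · norm_num [mex_empty]
    · have hne : List.replicate n 1 ≠ [] := List.ne_nil_of_length_pos (by simpa using hn)
      rw [if_neg hne, if_pos le_rfl, Finset.union_empty,
        subpart10_cons (by intro x hx; rw [List.eq_of_mem_replicate hx]; norm_num),
        ih hn, mex_singleton]
      split_ifs <;> omega

lemma SGD_gamma {c s : ℕ} (hc : 2 ≤ c) (hs : 1 ≤ s) :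
    SGD (c :: List.replicate s 1) = mex {(s - 1) % 2, (c - 2) % 2} := by
  have hne : List.replicate s 1 ≠ [] := List.ne_nil_of_length_pos (by simp; omega)
  have h10 : Subpart (c :: List.replicate s 1) 1 0 = List.replicate s 1 :=
    subpart10_cons (by intro x hx; rw [List.eq_of_mem_replicate hx]; norm_num)
  have h11 : Subpart (c :: List.replicate s 1) 1 1 = [] := by
    rw [subpart11_cons]
    simp [List.filter_eq_nil_iff, List.eq_of_mem_replicate]
  have h01 : Subpart (c :: List.replicate s 1) 0 1 = [c - 1] := by
    rw [subpart01_cons _ hc, h11]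
  have hcc : c - 1 - 1 = c - 2 := by omega
  rw [SGD, if_neg hne, if_neg (by omega), h10, h01, SGD_col hs, SGD_single (by omega), hcc,
    ← Finset.insert_eq]


lemma subpart_nil_of_le_one {b : ℕ} {w : List ℕ} (hs : (b :: w).Pairwise (· ≥ ·)) (hb : b ≤ 1) :
    Subpart (b :: w) 0 1 = [] := by
  apply List.filter_eq_nil_iff.mpr
  intro x hx
  simp only [List.drop_zero, List.mem_map] at hx
  obtain ⟨y, hy, rfl⟩ := hx
  have hyb : y ≤ b := by
    rcases List.mem_cons.mp hy with rfl | hy'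
    · exact le_rfl
    · exact (List.pairwise_cons.mp hs).1 y hy'
  simp
  omega

lemma shape_t {t : List ℕ} (hpt : IsPartition t) (htne : t ≠ []) (h11 : Subpart t 1 1 = []) :
    ∃ c s, 1 ≤ c ∧ t = c :: List.replicate s 1 := by
  obtain ⟨c, tt, rfl⟩ := List.exists_cons_of_ne_nil htne
  refine ⟨c, tt.length, hpt.2 c (List.mem_cons_self), ?_⟩
  congr 1
  rw [List.eq_replicate_iff]
  refine ⟨rfl, fun x hx => ?_⟩
  have h1 : ¬ (x - 1 ≠ 0) := by
    rw [subpart11_cons] at h11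
    have := List.filter_eq_nil_iff.mp h11 (x - 1) (List.mem_map_of_mem hx)
    simpa using this
  have := hpt.2 x (List.mem_cons_of_mem _ hx)
  omega

lemma nu_of_shape (a c s : ℕ) (hc : 2 ≤ c) :
    Subpart (a :: c :: List.replicate s 1) 1 1 = [c - 1] := by
  rw [subpart11_cons, List.map_cons, List.map_replicate, List.filter_cons,
    if_pos (by simp; omega)]
  congr 1
  apply List.filter_eq_nil_iff.mpr
  intro x hx
  rw [List.eq_of_mem_replicate hx]
  simp

lemma main_diag : ∀ n : ℕ, ∀ μ : List ℕ, μ.sum + μ.length ≤ n → IsPartition μ →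
    Subpart μ 1 1 ≠ [] → SGD μ = SGD (Subpart μ 1 1) := by
  intro n
  induction n with
  | zero =>
    rintro (_ | ⟨a, t⟩) hm hp hne
    · exact absurd rfl hne
    · simp at hm
  | succ n ih =>
    rintro (_ | ⟨a, t⟩) hm hp hne
    · exact absurd rfl hne
    have hsorted : (a :: t).Pairwise (· ≥ ·) := hp.1
    have hpos := hp.2
    have hpt : IsPartition t :=
      ⟨(List.pairwise_cons.mp hsorted).2, fun x hx => hpos x (List.mem_cons_of_mem a hx)⟩
    have hνpart : IsPartition (Subpart (a :: t) 1 1) := subpart_isPartition hp 1 1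
    obtain ⟨b, w, hbw⟩ := List.exists_cons_of_ne_nil hne
    rw [hbw] at hνpart
    have ha2 : 2 ≤ a := by
      have hbmem : b ∈ Subpart (a :: t) 1 1 := by
        rw [hbw]; exact List.mem_cons_self
      simp only [Subpart, List.drop_one, List.tail_cons, List.mem_filter, List.mem_map,
        decide_eq_true_eq] at hbmem
      obtain ⟨⟨x, hx, rfl⟩, hb0⟩ := hbmem
      have := (List.pairwise_cons.mp hsorted).1 x hx
      omega
    have htne : t ≠ [] := by
      intro h; apply hne; subst h; rfl
    have hsub10 : Subpart (a :: t) 1 0 = t :=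
      subpart10_cons (fun x hx => hpos x (List.mem_cons_of_mem a hx))
    have hsub01 : Subpart (a :: t) 0 1 = (a - 1) :: (b :: w) := by
      rw [subpart01_cons t ha2, hbw]
    have hSGDμ : SGD (a :: t) = mex {SGD t, SGD ((a - 1) :: (b :: w))} := by
      rw [SGD, if_neg htne, if_neg (by omega), hsub10, hsub01, ← Finset.insert_eq]
    have hmt : t.sum + t.length ≤ n := by
      have := subpart10_lt a t; rw [hsub10] at this
      simp only [List.sum_cons, List.length_cons] at hm this
      omega
    have hm01 : ((a - 1) :: (b :: w)).sum + ((a - 1) :: (b :: w)).length ≤ n := by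
      have := subpart01_lt a t; rw [hsub01] at this
      simp only [List.sum_cons, List.length_cons] at hm this ⊢
      omega
    have hp01 : IsPartition ((a - 1) :: (b :: w)) := by
      rw [← hsub01]; exact subpart_isPartition hp 0 1
    have hw_eq : Subpart (b :: w) 1 0 = w :=
      subpart10_cons (fun x hx => hνpart.2 x (List.mem_cons_of_mem b hx))
    have hA := subpart_subpart hsorted 1 0 1 1
    rw [hsub10] at hA
    norm_num at hA
    have hB := subpart_subpart hsorted 1 1 1 0
    rw [hbw] at hB
    norm_num at hB
    have hkey1 : Subpart t 1 1 = w := by rw [hA, ← hB, hw_eq]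
    have hkey2 : Subpart ((a - 1) :: (b :: w)) 1 1 = Subpart (b :: w) 0 1 := by
      simp [Subpart]
    have hb_pos : 0 < b := hνpart.2 b (List.mem_cons_self)
    rw [hSGDμ, hbw]
    by_cases hbig : 2 ≤ b
    · -- column move available for ν
      have hν01 : Subpart (b :: w) 0 1 = (b - 1) :: Subpart (b :: w) 1 1 :=
        subpart01_cons w hbig
      have hν01ne : Subpart (b :: w) 0 1 ≠ [] := by rw [hν01]; simp
      have ihcol : SGD ((a - 1) :: (b :: w)) = SGD (Subpart (b :: w) 0 1) := by
        rw [← hkey2]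
        exact ih _ hm01 hp01 (by rw [hkey2]; exact hν01ne)
      by_cases hwe : w = []
      · -- Case B : ν = [b], b ≥ 2
        subst hwe
        obtain ⟨c, s, hc1, hts⟩ := shape_t hpt htne hkey1
        have hc2 : 2 ≤ c := by
          by_contra hcle
          push_neg at hcle
          have : Subpart (a :: t) 1 1 = [] := by
            rw [subpart11_cons]
            apply List.filter_eq_nil_iff.mpr
            intro x hx
            simp only [List.mem_map] at hx
            obtain ⟨y, hy, rfl⟩ := hx
            have : y = c ∨ y = 1 := by
              rw [hts] at hy
              rcases List.mem_cons.mp hy with rfl | hy'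
              · exact Or.inl rfl
              · exact Or.inr (List.eq_of_mem_replicate hy')
            simp
            omega
          rw [hbw] at this
          exact List.cons_ne_nil _ _ this
        have hbc : b = c - 1 := by
          have := nu_of_shape a c s hc2
          rw [← hts, hbw] at this
          exact (List.cons_eq_cons.mp this).1
        have hν01v : Subpart ([b] : List ℕ) 0 1 = [b - 1] := by
          rw [hν01]
          rfl
        have hSGDν : SGD ([b] : List ℕ) = (b - 1) % 2 := SGD_single (by omega)
        have hSGD01 : SGD (Subpart ([b] : List ℕ) 0 1) = (b - 2) % 2 := by
          rw [hν01v, SGD_single (by omega)]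
          omega
        have hmexval : mex {(b - 2) % 2} = (b - 1) % 2 := by
          rw [mex_singleton]
          split_ifs <;> omega
        have hSGDt_ne : SGD t ≠ (b - 1) % 2 := by
          rcases Nat.eq_zero_or_pos s with rfl | hs
          · rw [hts, List.replicate_zero, SGD_single (by omega)]
            omega
          · rw [hts, SGD_gamma hc2 hs]
            intro h
            apply mex_notMem {(s - 1) % 2, (c - 2) % 2}
            rw [h, hbc]
            have : c - 1 - 1 = c - 2 := by omega
            rw [this]
            simp
        rw [ihcol, hSGD01, hSGDν, mex_pair (by rw [hmexval]; exact hSGDt_ne), hmexval]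
      · -- Case A : both moves available for ν
        have iht : SGD t = SGD (Subpart t 1 1) :=
          ih _ hmt hpt (by rw [hkey1]; exact hwe)
        have hSGDν : SGD (b :: w)
            = mex {SGD (Subpart (b :: w) 1 0), SGD (Subpart (b :: w) 0 1)} := by
          rw [SGD, if_neg hwe, if_neg (by omega), ← Finset.insert_eq]
        rw [hSGDν, hw_eq, ihcol, iht, hkey1]
    · -- b = 1
      have hb1 : b = 1 := by omega
      subst hb1
      by_cases hwe : w = []
      · -- Case D : ν = [1]
        subst hwe
        have hSGDν : SGD ([1] : List ℕ) = 0 := SGD_single le_rfl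
        obtain ⟨c, s, hc1, hts⟩ := shape_t hpt htne hkey1
        have hc2 : 2 ≤ c := by
          by_contra hcle
          push_neg at hcle
          have : Subpart (a :: t) 1 1 = [] := by
            rw [subpart11_cons]
            apply List.filter_eq_nil_iff.mpr
            intro x hx
            simp only [List.mem_map] at hx
            obtain ⟨y, hy, rfl⟩ := hx
            have : y = c ∨ y = 1 := by
              rw [hts] at hy
              rcases List.mem_cons.mp hy with rfl | hy'
              · exact Or.inl rfl
              · exact Or.inr (List.eq_of_mem_replicate hy')
            simp
            omega
          rw [hbw] at this
          exact List.cons_ne_nil _ _ this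
        have hbc : (1 : ℕ) = c - 1 := by
          have := nu_of_shape a c s hc2
          rw [← hts, hbw] at this
          exact (List.cons_eq_cons.mp this).1
        have hcv : c = 2 := by omega
        have hSGDt_ne : SGD t ≠ 0 := by
          rcases Nat.eq_zero_or_pos s with rfl | hs
          · rw [hts, hcv, List.replicate_zero, SGD_single (by omega)]
            omega
          · rw [hts, SGD_gamma hc2 hs]
            intro h
            apply mex_notMem {(s - 1) % 2, (c - 2) % 2}
            rw [h, hcv]
            simp
        have hSGD01_ne : SGD ((a - 1) :: [1]) ≠ 0 := by
          rcases Nat.eq_or_lt_of_le ha2 with ha | ha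
          · have ha' : a - 1 = 1 := by omega
            have : (a - 1) :: [1] = List.replicate 2 1 := by
              rw [ha']; rfl
            rw [this, SGD_col (by omega)]
            omega
          · have : ((a - 1) :: [1] : List ℕ) = (a - 1) :: List.replicate 1 1 := by rfl
            rw [this, SGD_gamma (by omega) le_rfl]
            intro h
            apply mex_notMem {(1 - 1) % 2, (a - 1 - 2) % 2}
            rw [h]
            simp
        rw [hSGDν, mex_pair_zero hSGDt_ne hSGD01_ne]
      · -- Case C : ν = 1 :: w, all ones
        have hw_ones : w = List.replicate w.length 1 := by
          rw [List.eq_replicate_iff]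
          refine ⟨rfl, fun x hx => ?_⟩
          have h1 : x ≤ 1 := (List.pairwise_cons.mp hνpart.1).1 x hx
          have h2 : 0 < x := hνpart.2 x (List.mem_cons_of_mem _ hx)
          omega
        set s := w.length with hs_def
        have hs1 : 1 ≤ s := by
          rw [hs_def]
          exact List.length_pos_iff.mpr hwe
        have hSGDν : SGD (1 :: w) = s % 2 := by
          rw [hw_ones, ← List.replicate_succ, SGD_col (by omega)]
          omega
        have iht : SGD t = (s - 1) % 2 := by
          rw [ih _ hmt hpt (by rw [hkey1]; exact hwe), hkey1, hw_ones, SGD_col hs1]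
        have hSGD01_ne : SGD ((a - 1) :: 1 :: w) ≠ s % 2 := by
          rcases Nat.eq_or_lt_of_le ha2 with ha | ha
          · have ha' : a - 1 = 1 := by omega
            have : (a - 1) :: 1 :: w = List.replicate (s + 2) 1 := by
              rw [ha', hw_ones, ← List.replicate_succ, ← List.replicate_succ]
            rw [this, SGD_col (by omega)]
            omega
          · have : (a - 1) :: 1 :: w = (a - 1) :: List.replicate (s + 1) 1 := by
              rw [hw_ones, ← List.replicate_succ]
            rw [this, SGD_gamma (by omega) (by omega)]
            intro h
            apply mex_notMem {(s + 1 - 1) % 2, (a - 1 - 2) % 2}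
            rw [h]
            simp
        have hmexval : mex {(s - 1) % 2} = s % 2 := by
          rw [mex_singleton]
          split_ifs <;> omega
        rw [hSGDν, iht, Finset.pair_comm,
          mex_pair (by rw [hmexval]; exact hSGD01_ne), hmexval]

/-- Sprague–Grundy values of Downright propagate along diagonals. -/
theorem stmt7 (l : List ℕ) (hp : IsPartition l) (i j : ℕ) (hi : 1 ≤ i) (hj : 1 ≤ j)
    (hne : Subpart l i j ≠ []) :
    SGD (Subpart l (i - 1) (j - 1)) = SGD (Subpart l i j) := by
  have hps := subpart_isPartition hp (i - 1) (j - 1)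
  have hcomp : Subpart (Subpart l (i - 1) (j - 1)) 1 1 = Subpart l i j := by
    rw [subpart_subpart hp.1]
    congr 1 <;> omega
  rw [← hcomp]
  exact main_diag _ _ le_rfl hps (by rw [hcomp]; exact hne)
end

section
/- For the one-row partition λ = (λ₁) with λ₁ ≥ 0, the Sprague–Grundy value of the LCTR game equals 0 if λ₁ = 0, equals 1 if λ₁ is odd, and equals 2 if λ₁ is even and positive. -/
lemma my_mex_eq (s : Finset ℕ) (k : ℕ) (hk : k ∉ s) (h : ∀ n < k, n ∈ s) : mex s = k := by
  apply IsLeast.csInf_eq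
  constructor
  · exact hk
  · intro n hn
    by_contra h'
    push_neg at h'
    exact hn (h n h')

lemma SGL_single (c : ℕ) (hc : 0 < c) : SGL [c] = if Odd c then 1 else 2 := by
  induction c using Nat.strong_induction_on with
  | _ c ih =>
    rw [SGL]
    have h10 : Subpart [c] 1 0 = [] := by simp [Subpart]
    have h01 : Subpart [c] 0 1 = [c-1].filter (fun x => x ≠ 0) := by simp [Subpart]
    rw [h10, h01]
    rcases Nat.eq_or_lt_of_le hc with h1 | h1
    · have : c = 1 := h1.symm
      subst this
      simp only [List.filter]
      norm_num
      rw [SGL]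
      apply my_mex_eq
      · simp
      · intro n hn
        interval_cases n
        simp
    · have hne : c - 1 ≠ 0 := by omega
      have : [c-1].filter (fun x => x ≠ 0) = [c-1] := by simp [List.filter, hne]
      rw [this, SGL]
      have hrec := ih (c-1) (by omega) (by omega)
      rw [hrec]
      by_cases hodd : Odd c
      · have : ¬ Odd (c - 1) := by
          rcases hodd with ⟨k, hk⟩
          rintro ⟨m, hm⟩
          omega
      
        rw [if_neg this, if_pos hodd]
        apply my_mex_eq
        · simp
        · intro n hn
          interval_cases n
          simp
      · have hodd' : Odd (c - 1) := by
          rw [Nat.odd_iff] at *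
          omega
        rw [if_pos hodd', if_neg hodd]
        apply my_mex_eq
        · simp
        · intro n hn
          interval_cases n <;> simp


/-- STATEMENT 9: Sprague–Grundy value of the one-row LCTR game (the row `(0)` is

interpreted as the empty partition). -/theorem stmt9 (c : ℕ) :
    SGL (if c = 0 then ([] : List ℕ) else [c]) =
      if c = 0 then 0 else if Odd c then 1 else 2 := by
  by_cases hc : c = 0
  · simp [hc, SGL]
  · rw [if_neg hc, if_neg hc]
    exact SGL_single c (Nat.pos_of_ne_zero hc)
end

section
/- For all integers r ≥ 1 and c ≥ 1, the number of nodes of the game tree of Downright on the rectangular partition R_{r,c} equals C(r+c, r) − 1, where C denotes the binomial coefficient. -/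
lemma sub10_rect (r c : ℕ) (hc : c ≠ 0) :
    Subpart (c :: List.replicate r c) 1 0 = List.replicate r c := by
  simp [Subpart, List.filter_replicate, hc]

lemma sub01_rect (r c : ℕ) :
    Subpart ((c+2) :: List.replicate r (c+2)) 0 1 = List.replicate (r+1) (c+1) := by
  simp [Subpart, List.filter_replicate, ← List.replicate_succ]

lemma stmt16_aux (n : ℕ) : ∀ r c : ℕ, r + c ≤ n → 1 ≤ r → 1 ≤ c →
    nodesD (rectPart r c) = Nat.choose (r + c) r - 1 := by
  induction n with
  | zero => intro r c h hr hc; omega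
  | succ n ih =>
    rintro (_ | r) (_ | c) h hr hc <;> try omega
    have hrect : rectPart (r+1) (c+1) = (c+1) :: List.replicate r (c+1) := rfl
    rw [hrect, nodesD]
    rw [sub10_rect r (c+1) (by omega)]
    rcases Nat.eq_zero_or_pos c with rfl | hcpos
    · -- c = 0 : a = 1 ≤ 1 branch
      rcases Nat.eq_zero_or_pos r with rfl | hrpos
      · simp
      · have ht : List.replicate r 1 ≠ ([] : List ℕ) := by
          simp; omega
        rw [if_neg ht, if_pos (le_refl 1)]
        have := ih r 1 (by omega) (by omega) (by omega)
        rw [show List.replicate r 1 = rectPart r 1 from rfl, this]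
        have h1 : 0 < (r + 1).choose r := Nat.choose_pos (by omega)
        have h2 : (r + 1 + 1).choose (r + 1) = (r+1).choose r + (r+1).choose (r+1) :=
          Nat.choose_succ_succ _ _
        simp [Nat.choose_self] at h2 ⊢
        omega
    · -- c ≥ 1
      obtain ⟨c', rfl⟩ : ∃ c', c = c' + 1 := ⟨c - 1, by omega⟩
      rw [if_neg (by omega : ¬ c' + 1 + 1 ≤ 1), sub01_rect r c']
      have hv : nodesD (List.replicate (r+1) (c'+1)) = (r + 1 + (c' + 1)).choose (r+1) - 1 :=
        ih (r+1) (c'+1) (by omega) (by omega) (by omega)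
      have pascal : (r + 1 + (c' + 1 + 1)).choose (r + 1) =
          (r + (c' + 1 + 1)).choose r + (r + 1 + (c' + 1)).choose (r + 1) := by
        have e1 : r + 1 + (c' + 1 + 1) = r + c' + 2 + 1 := by omega
        have e2 : r + (c' + 1 + 1) = r + c' + 2 := by omega
        have e3 : r + 1 + (c' + 1) = r + c' + 2 := by omega
        rw [e1, e2, e3]
        exact Nat.choose_succ_succ (r + c' + 2) r
      have p1 : 0 < (r + (c' + 1 + 1)).choose r := Nat.choose_pos (by omega)
      have p2 : 0 < (r + 1 + (c' + 1)).choose (r + 1) := Nat.choose_pos (by omega)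
      rcases Nat.eq_zero_or_pos r with rfl | hrpos
      · simp only [List.replicate_zero, if_pos rfl]
        rw [hv]
        simp [Nat.choose_one_right] at pascal ⊢
        omega
      · have ht : List.replicate r (c'+1+1) ≠ ([] : List ℕ) := by
          simp; omega
        rw [if_neg ht]
        have hh : nodesD (List.replicate r (c'+1+1)) = (r + (c'+1+1)).choose r - 1 :=
          ih r (c'+2) (by omega) (by omega) (by omega)
        rw [hh, hv]
        omega

/-- the game tree of Downright on the rectangle `R_{r,c}` has
`C(r+c, r) - 1` nodes. -/
theorem stmt16 (r c : ℕ) (hr : 1 ≤ r) (hc : 1 ≤ c) :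
    nodesD (rectPart r c) = Nat.choose (r + c) r - 1 := by
  exact stmt16_aux (r + c) r c le_rfl hr hc
end
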